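/- Let n ≥ 1 and let v, q : Fin n → ℝ be positive antitone sequences, and let p* : Fin n → ℝ be the recursively defined envy-free prices (p* (n-1) = v (n-1) * q (n-1); p* k = v k * q k - max_{i > k} (v k * q i - p* i) for k < n-1). Then p* is antitone: for all indices k ≤ j, p* k ≥ p* j. In particular p* (n-1) is the lowest price. -/
import Mathlib


/-- Maximum of `f i` over indices `i > k`, well defined when `(k : ℕ) < n - 1`. -/
noncomputable def maxAbove {n : ℕ} (k : Fin n) (hk : (k : ℕ) < n - 1) (f : Fin n → ℝ) : ℝ :=
  (Finset.univ.filter fun i => k < i).sup'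
    ⟨⟨(k : ℕ) + 1, by omega⟩, by
      simp only [Finset.mem_filter, Finset.mem_univ, true_and, Fin.lt_def]
      omega⟩ f

/-- The recursively defined prices `p*` are antitone: `k ≤ j` implies
`p* k ≥ p* j`; in particular `p* (n-1)` is the lowest price. -/
theorem pstar_antitone (n : ℕ) (hn : 1 ≤ n) (v q : Fin n → ℝ)
    (hvpos : ∀ i, 0 < v i) (hqpos : ∀ i, 0 < q i)
    (hv : Antitone v) (hq : Antitone q)
    (pstar : Fin n → ℝ)
    (hlast : pstar ⟨n - 1, by omega⟩ = v ⟨n - 1, by omega⟩ * q ⟨n - 1, by omega⟩)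
    (hrec : ∀ (k : Fin n) (hk : (k : ℕ) < n - 1),
      pstar k = v k * q k - maxAbove k hk (fun i => v k * q i - pstar i)) :
    ∀ k j : Fin n, k ≤ j → pstar k ≥ pstar j := by
  have step : ∀ k : Fin n, ∀ hk : (k : ℕ) < n - 1,
      pstar k ≥ pstar ⟨(k : ℕ) + 1, by omega⟩ := by
    intro k hk
    have hne : (Finset.univ.filter fun i => k < i).Nonempty :=
      ⟨⟨(k : ℕ) + 1, by omega⟩, by
        simp only [Finset.mem_filter, Finset.mem_univ, true_and, Fin.lt_def]; omega⟩
    obtain ⟨i0, hi0mem, hM⟩ :=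
      Finset.exists_mem_eq_sup' hne (fun i => v k * q i - pstar i)
    have hi0k : (k : ℕ) < (i0 : ℕ) := by
      have := (Finset.mem_filter.mp hi0mem).2
      exact Fin.lt_def.mp this
    have hpk : pstar k = v k * q k - (v k * q i0 - pstar i0) := by
      rw [hrec k hk]
      have : maxAbove k hk (fun i => v k * q i - pstar i) = v k * q i0 - pstar i0 := by
        unfold maxAbove
        exact hM
      rw [this]
    rcases eq_or_lt_of_le (Nat.succ_le_of_lt hi0k) with heq | hgt
    · have hi0 : i0 = ⟨(k : ℕ) + 1, by omega⟩ := Fin.ext (by simpa using heq.symm)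
      rw [hi0] at hpk
      have h1 : q k ≥ q ⟨(k : ℕ) + 1, by omega⟩ := hq (by simp [Fin.le_def])
      nlinarith [hvpos k]
    · have hk1lt : ((⟨(k : ℕ) + 1, by omega⟩ : Fin n) : ℕ) < n - 1 := by
        have := i0.isLt
        simp only [Fin.val_mk]
        omega
      have hmem : i0 ∈ Finset.univ.filter
          fun i => (⟨(k : ℕ) + 1, by omega⟩ : Fin n) < i := by
        simp only [Finset.mem_filter, Finset.mem_univ, true_and, Fin.lt_def, Fin.val_mk]
        omega
      have hle : maxAbove ⟨(k : ℕ) + 1, by omega⟩ hk1lt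
          (fun i => v ⟨(k : ℕ) + 1, by omega⟩ * q i - pstar i) ≥
          v ⟨(k : ℕ) + 1, by omega⟩ * q i0 - pstar i0 := by
        unfold maxAbove
        exact Finset.le_sup'
          (f := fun i => v ⟨(k : ℕ) + 1, by omega⟩ * q i - pstar i) hmem
      have hpk1 : pstar ⟨(k : ℕ) + 1, by omega⟩ ≤
          v ⟨(k : ℕ) + 1, by omega⟩ * q ⟨(k : ℕ) + 1, by omega⟩ -
            (v ⟨(k : ℕ) + 1, by omega⟩ * q i0 - pstar i0) := by
        rw [hrec _ hk1lt]; linarith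
      have hq01 : q k ≥ q ⟨(k : ℕ) + 1, by omega⟩ := hq (by simp [Fin.le_def])
      have hq1i : q ⟨(k : ℕ) + 1, by omega⟩ ≥ q i0 := hq (by simp [Fin.le_def]; omega)
      have hv01 : v k ≥ v ⟨(k : ℕ) + 1, by omega⟩ := hv (by simp [Fin.le_def])
      nlinarith [hvpos (⟨(k : ℕ) + 1, by omega⟩ : Fin n)]
  suffices H : ∀ m : ℕ, ∀ h : m < n, ∀ k : Fin n, (k : ℕ) ≤ m → pstar k ≥ pstar ⟨m, h⟩ by
    intro k j hkj
    have := H (j : ℕ) j.isLt k hkj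
    simpa using this
  intro m
  induction m with
  | zero =>
    intro h k hk
    have hk0 : k = ⟨0, h⟩ := Fin.ext (by simp only [Fin.val_mk]; omega)
    rw [hk0]
  | succ m ih =>
    intro h k hkm
    rcases Nat.lt_or_ge (k : ℕ) (m + 1) with hlt | hge
    · have hm : m < n := by omega
      have hstep := step ⟨m, hm⟩ (by simp only [Fin.val_mk]; omega)
      calc pstar k ≥ pstar ⟨m, hm⟩ := ih hm k (by omega)
        _ ≥ pstar ⟨m + 1, h⟩ := hstep
    · have hk1 : k = ⟨m + 1, h⟩ := Fin.ext (by simp only [Fin.val_mk]; omega)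
      rw [hk1]
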